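/- arXiv:cs/0312054 — 3 statements merged into one kernel-verified Lean document; each statement's English description precedes it below -/
import Mathlib

section
/- With pivot chosen as the (p+1)th smallest of a uniformly random s-element sample from n distinct keys (0 ≤ p < s ≤ n, n ≥ 2), and q = s−1−p, the expectation of j_v(n−1−j_v)/(n−1) equals ((p+1)(q+1)/((s+1)(s+2)))·((n+1)(n+2)/(n−1)) − n/(n−1), where j_v is the number of keys below the pivot. -/
open Finset

lemma conv_choose (a : ℕ) : ∀ b m : ℕ,
    ∑ j ∈ Finset.range (m + 1), Nat.choose j a * Nat.choose (m - j) b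
      = Nat.choose (m + 1) (a + b + 1) := by
  induction a with
  | zero =>
    intro b m
    induction m with
    | zero =>
      rcases b with _ | b <;> simp [Nat.choose]
    | succ m ih =>
      rw [Finset.sum_range_succ']
      simp only [Nat.choose_zero_right, one_mul] at ih ⊢
      have h : ∀ j ∈ Finset.range (m + 1),
          Nat.choose (m + 1 - (j + 1)) b = Nat.choose (m - j) b := by
        intro j _; congr 1; omega
      rw [Finset.sum_congr rfl h, ih]
      simp only [Nat.zero_add, Nat.sub_zero, Nat.choose_succ_succ (m + 1) b,
        Nat.succ_eq_add_one]
      omega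
  | succ a iha =>
    intro b m
    induction m with
    | zero =>
      simp [Nat.choose_eq_zero_of_lt (show 1 < a + 1 + b + 1 by omega)]
    | succ m ih =>
      rw [Finset.sum_range_succ']
      have h : ∀ j ∈ Finset.range (m + 1),
          Nat.choose (j + 1) (a + 1) * Nat.choose (m + 1 - (j + 1)) b
            = Nat.choose j a * Nat.choose (m - j) b
              + Nat.choose j (a + 1) * Nat.choose (m - j) b := by
        intro j _
        have h2 : m + 1 - (j + 1) = m - j := by omega
        rw [h2, Nat.choose_succ_succ, Nat.add_mul]
      rw [Finset.sum_congr rfl h, Finset.sum_add_distrib, iha b m, ih,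
        Nat.choose_eq_zero_of_lt (Nat.succ_pos a), Nat.zero_mul, Nat.add_zero,
        show a + 1 + b + 1 = a + b + 1 + 1 from by omega,
        Nat.choose_succ_succ (m + 1) (a + b + 1)]

/-- With the pivot chosen as the `(p+1)`th smallest of a uniformly random
`s`-sample from `n` distinct keys (`q = s-1-p`), the number `j_v` of keys
below the pivot has `P[j_v = j] = C(j,p)C(n-1-j,q)/C(n,s)`, and the
expectation of `j_v(n-1-j_v)/(n-1)` equals
`((p+1)(q+1)/((s+1)(s+2)))((n+1)(n+2)/(n-1)) - n/(n-1)`. -/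
theorem expected_T (n s p q : ℕ) (hps : p < s) (hsn : s ≤ n) (hn : 2 ≤ n)
    (hq : q = s - 1 - p) :
    ∑ j ∈ Finset.range n,
        ((j : ℚ) * ((n : ℚ) - 1 - (j : ℚ)) / ((n : ℚ) - 1)) *
          ((Nat.choose j p : ℚ) * (Nat.choose (n - 1 - j) q : ℚ) / (Nat.choose n s : ℚ))
      = (((p : ℚ) + 1) * ((q : ℚ) + 1) / (((s : ℚ) + 1) * ((s : ℚ) + 2))) *
          (((n : ℚ) + 1) * ((n : ℚ) + 2) / ((n : ℚ) - 1))
        - (n : ℚ) / ((n : ℚ) - 1) := by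
  have hpq : p + q + 1 = s := by omega
  have hn1 : (n : ℚ) - 1 ≠ 0 := by
    have : (2 : ℚ) ≤ (n : ℚ) := by exact_mod_cast hn
    linarith
  have hcs : (0 : ℚ) < (Nat.choose n s : ℚ) := by
    exact_mod_cast Nat.choose_pos hsn
  -- sum of probabilities (numerator version)
  have S0 : ∑ j ∈ Finset.range n, Nat.choose j p * Nat.choose (n - 1 - j) q
      = Nat.choose n s := by
    have h := conv_choose p q (n - 1)
    rw [Nat.sub_add_cancel (by omega : 1 ≤ n), hpq] at h
    exact h
  -- second-moment-type sum
  have S2 : ∑ j ∈ Finset.range n,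
      (j + 1) * (n - j) * (Nat.choose j p * Nat.choose (n - 1 - j) q)
      = (p + 1) * (q + 1) * Nat.choose (n + 2) (s + 2) := by
    have key : ∀ j ∈ Finset.range n,
        (j + 1) * (n - j) * (Nat.choose j p * Nat.choose (n - 1 - j) q)
          = (p + 1) * (q + 1) *
            (Nat.choose (j + 1) (p + 1) * Nat.choose (n - j) (q + 1)) := by
      intro j hj
      have hj' : j < n := Finset.mem_range.mp hj
      have h1 : (j + 1) * Nat.choose j p = Nat.choose (j + 1) (p + 1) * (p + 1) :=
        Nat.add_one_mul_choose_eq j p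
      have h2 : (n - j) * Nat.choose (n - 1 - j) q
          = Nat.choose (n - j) (q + 1) * (q + 1) := by
        have hm : n - j = (n - 1 - j) + 1 := by omega
        rw [hm]
        exact Nat.add_one_mul_choose_eq (n - 1 - j) q
      calc (j + 1) * (n - j) * (Nat.choose j p * Nat.choose (n - 1 - j) q)
          = ((j + 1) * Nat.choose j p) * ((n - j) * Nat.choose (n - 1 - j) q) := by
            ring
        _ = (Nat.choose (j + 1) (p + 1) * (p + 1)) *
              (Nat.choose (n - j) (q + 1) * (q + 1)) := by rw [h1, h2]
        _ = (p + 1) * (q + 1) *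
              (Nat.choose (j + 1) (p + 1) * Nat.choose (n - j) (q + 1)) := by ring
    rw [Finset.sum_congr rfl key, ← Finset.mul_sum]
    congr 1
    have h := conv_choose (p + 1) (q + 1) (n + 1)
    rw [Finset.sum_range_succ, Finset.sum_range_succ'] at h
    have e1 : Nat.choose 0 (p + 1) * Nat.choose (n + 1 - 0) (q + 1) = 0 := by simp
    have e2 : Nat.choose (n + 1) (p + 1) * Nat.choose (n + 1 - (n + 1)) (q + 1) = 0 := by
      simp
    rw [e1, e2, Nat.add_zero, Nat.add_zero] at h
    have e3 : ∀ j ∈ Finset.range n,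
        Nat.choose (j + 1) (p + 1) * Nat.choose (n + 1 - (j + 1)) (q + 1)
          = Nat.choose (j + 1) (p + 1) * Nat.choose (n - j) (q + 1) := by
      intro j _; congr 2; omega
    rw [Finset.sum_congr rfl e3] at h
    rw [h]
    congr 1
    omega
  -- now the rational computation
  have step : ∀ j ∈ Finset.range n,
      ((j : ℚ) * ((n : ℚ) - 1 - (j : ℚ)) / ((n : ℚ) - 1)) *
          ((Nat.choose j p : ℚ) * (Nat.choose (n - 1 - j) q : ℚ) / (Nat.choose n s : ℚ))
        = ((((j + 1) * (n - j) * (Nat.choose j p * Nat.choose (n - 1 - j) q) : ℕ) : ℚ)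
            - (n : ℚ) * ((Nat.choose j p * Nat.choose (n - 1 - j) q : ℕ) : ℚ))
          / (((n : ℚ) - 1) * (Nat.choose n s : ℚ)) := by
    intro j hj
    have hj' : j < n := Finset.mem_range.mp hj
    have hnj : ((n - j : ℕ) : ℚ) = (n : ℚ) - (j : ℚ) := by
      rw [Nat.cast_sub hj'.le]
    push_cast [hnj]
    field_simp
    ring
  rw [Finset.sum_congr rfl step, ← Finset.sum_div, Finset.sum_sub_distrib,
    ← Finset.mul_sum, ← Nat.cast_sum, ← Nat.cast_sum, S2, S0]
  -- key ratio identity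
  have ratio : ((s : ℚ) + 1) * ((s : ℚ) + 2) * (Nat.choose (n + 2) (s + 2) : ℚ)
      = ((n : ℚ) + 1) * ((n : ℚ) + 2) * (Nat.choose n s : ℚ) := by
    have h1 := Nat.add_one_mul_choose_eq n s
    have h2 := Nat.add_one_mul_choose_eq (n + 1) (s + 1)
    have h1' : ((n : ℚ) + 1) * (Nat.choose n s : ℚ)
        = (Nat.choose (n + 1) (s + 1) : ℚ) * ((s : ℚ) + 1) := by exact_mod_cast h1
    have h2' : ((n : ℚ) + 2) * (Nat.choose (n + 1) (s + 1) : ℚ)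
        = (Nat.choose (n + 2) (s + 2) : ℚ) * ((s : ℚ) + 2) := by exact_mod_cast h2
    nlinarith [h1', h2']
  have hs12 : ((s : ℚ) + 1) * ((s : ℚ) + 2) ≠ 0 := by positivity
  field_simp
  push_cast
  linear_combination (((p : ℚ) + 1) * ((q : ℚ) + 1)) * ratio
end

section
/- When sample elements serve as sentinels (pivot is (p+1)th of an s-sample with q = s−1−p > 0, and the remaining n−s keys in positions p+2..n−q are uniformly random), the expectation of (j_v − p)(n−1−q−j_v)/(n−s) equals ((p+1)(q+1)/((s+1)(s+2)))·(n−s−1) for s < n, and the expectation of j_v − p equals (p+1)(n−s)/(s+1). -/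
lemma hockey (b M : ℕ) : ∑ t ∈ Finset.range (M+1), (b+t).choose b = (b+M+1).choose (b+1) := by
  induction M with
  | zero => simp
  | succ M ih =>
    rw [Finset.sum_range_succ, ih]
    have e : (b+(M+1)).choose b = (b+M+1).choose b := by congr 1
    have key : ((b+M+1)+1).choose (b+1) = (b+M+1).choose b + (b+M+1).choose (b+1) :=
      Nat.choose_succ_succ _ _
    have e2 : (b+(M+1)+1).choose (b+1) = ((b+M+1)+1).choose (b+1) := by congr 2
    omega

lemma Tlem (b a M : ℕ) : ∑ t ∈ Finset.range (M+1), (a+t).choose a * (b+(M-t)).choose b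
    = (a+b+M+1).choose M := by
  induction a generalizing M with
  | zero =>
    have h := Finset.sum_range_reflect (fun j => (b+j).choose b) (M+1)
    simp only [Nat.add_sub_cancel] at h
    have h2 : ∑ t ∈ Finset.range (M+1), (0+t).choose 0 * (b+(M-t)).choose b
        = ∑ t ∈ Finset.range (M+1), (b+t).choose b := by
      rw [← h]
      apply Finset.sum_congr rfl; intro t ht
      simp
    have hsym := Nat.choose_symm (show b+1 ≤ b+M+1 by omega)
    have hs : (b+M+1) - (b+1) = M := by omega
    rw [hs] at hsym
    rw [h2, hockey, ← hsym]
    congr 1; omega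
  | succ a iha =>
    induction M with
    | zero => simp
    | succ M ihM =>
      have expand : ∀ t ∈ Finset.range (M+2),
          (a+1+t).choose (a+1) * (b+(M+1-t)).choose b
          = (a+t).choose a * (b+(M+1-t)).choose b
            + (a+t).choose (a+1) * (b+(M+1-t)).choose b := by
        intro t ht
        rw [show a+1+t = (a+t)+1 by omega, Nat.choose_succ_succ]
        ring
      rw [Finset.sum_congr rfl expand, Finset.sum_add_distrib]
      have e1 : ∑ t ∈ Finset.range (M+2), (a+t).choose a * (b+(M+1-t)).choose b
          = (a+b+(M+1)+1).choose (M+1) := iha (M+1)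
      have e2 : ∑ t ∈ Finset.range (M+2), (a+t).choose (a+1) * (b+(M+1-t)).choose b
          = (a+1+b+M+1).choose M := by
        rw [Finset.sum_range_succ']
        simp only [Nat.add_zero, Nat.choose_succ_self, Nat.zero_mul]
        rw [← ihM]
        apply Finset.sum_congr rfl; intro t ht
        congr 2 <;> omega
      rw [e1, e2]
      have e3 : (a+1+b+M+1).choose M = (a+b+(M+1)+1).choose M := by congr 1; omega
      have e4 : (a+1+b+(M+1)+1).choose (M+1) = ((a+b+(M+1)+1)+1).choose (M+1) := by
        congr 2; omega
      have key : ((a+b+(M+1)+1)+1).choose (M+1)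
          = (a+b+(M+1)+1).choose M + (a+b+(M+1)+1).choose (M+1) := Nat.choose_succ_succ _ _
      omega

lemma L2 (p q M : ℕ) :
    ∑ t ∈ Finset.range (M+2), t * ((p+t).choose p * (q+(M+1-t)).choose q)
      = (p+1) * (p+q+M+2).choose M := by
  have step : ∀ t ∈ Finset.range (M+2),
      t * ((p+t).choose p * (q+(M+1-t)).choose q)
      = (p+1) * ((p+t).choose (p+1) * (q+(M+1-t)).choose q) := by
    intro t ht
    have h := Nat.choose_succ_right_eq (p+t) p
    rw [Nat.add_sub_cancel_left] at h
    calc t * ((p+t).choose p * (q+(M+1-t)).choose q)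
        = ((p+t).choose p * t) * (q+(M+1-t)).choose q := by ring
      _ = ((p+t).choose (p+1) * (p+1)) * (q+(M+1-t)).choose q := by rw [h]
      _ = (p+1) * ((p+t).choose (p+1) * (q+(M+1-t)).choose q) := by ring
  rw [Finset.sum_congr rfl step, ← Finset.mul_sum]
  congr 1
  rw [Finset.sum_range_succ']
  simp only [Nat.add_zero, Nat.choose_succ_self, Nat.zero_mul]
  have := Tlem q (p+1) M
  rw [show p+1+q+M+1 = p+q+M+2 by omega] at this
  rw [← this]
  apply Finset.sum_congr rfl; intro t ht
  congr 2 <;> omega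

lemma L3 (p q M : ℕ) :
    ∑ t ∈ Finset.range (M+3), t * (M+2-t) * ((p+t).choose p * (q+(M+2-t)).choose q)
      = (p+1) * (q+1) * (p+q+M+3).choose M := by
  have step : ∀ t ∈ Finset.range (M+3),
      t * (M+2-t) * ((p+t).choose p * (q+(M+2-t)).choose q)
      = (p+1) * (q+1) * ((p+t).choose (p+1) * (q+(M+2-t)).choose (q+1)) := by
    intro t ht
    have h1 := Nat.choose_succ_right_eq (p+t) p
    rw [Nat.add_sub_cancel_left] at h1
    have h2 := Nat.choose_succ_right_eq (q+(M+2-t)) q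
    rw [Nat.add_sub_cancel_left] at h2
    calc t * (M+2-t) * ((p+t).choose p * (q+(M+2-t)).choose q)
        = ((p+t).choose p * t) * ((q+(M+2-t)).choose q * (M+2-t)) := by ring
      _ = ((p+t).choose (p+1) * (p+1)) * ((q+(M+2-t)).choose (q+1) * (q+1)) := by
          rw [h1, h2]
      _ = (p+1) * (q+1) * ((p+t).choose (p+1) * (q+(M+2-t)).choose (q+1)) := by ring
  rw [Finset.sum_congr rfl step, ← Finset.mul_sum]
  congr 1
  rw [Finset.sum_range_succ']
  simp only [Nat.add_zero, Nat.choose_succ_self, Nat.zero_mul]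
  rw [Finset.sum_range_succ]
  have hz : (q+(M+2-(M+1+1))).choose (q+1) = 0 := by
    simp [Nat.choose_succ_self]
  rw [hz]
  simp only [Nat.mul_zero, Nat.add_zero]
  have := Tlem (q+1) (p+1) M
  rw [show p+1+(q+1)+M+1 = p+q+M+3 by omega] at this
  rw [← this]
  apply Finset.sum_congr rfl; intro t ht
  simp only [Finset.mem_range] at ht
  congr 2 <;> omega

/-- Sentinel-tuned selection: the pivot is the `(p+1)`th smallest of an
`s`-sample (`q = s-1-p > 0`, `s < n`), and `t = j_v - p`, the number of
non-sample keys below the pivot, has distribution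
`P[t] = C(p+t,p)C(n-1-p-t,q)/C(n,s)`.  Then
`E[t(n-s-t)/(n-s)] = ((p+1)(q+1)/((s+1)(s+2)))(n-s-1)` and
`E[t] = (p+1)(n-s)/(s+1)`. -/
theorem sentinel_expected_swaps (n s p q : ℕ) (hps : p < s) (hq : q = s - 1 - p)
    (hq0 : 0 < q) (hsn : s < n) :
    (∑ t ∈ Finset.range (n - s + 1),
        ((t : ℚ) * ((n : ℚ) - (s : ℚ) - (t : ℚ)) / ((n : ℚ) - (s : ℚ))) *
          ((Nat.choose (p + t) p : ℚ) * (Nat.choose (n - 1 - p - t) q : ℚ)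
            / (Nat.choose n s : ℚ))
      = (((p : ℚ) + 1) * ((q : ℚ) + 1) / (((s : ℚ) + 1) * ((s : ℚ) + 2))) *
          ((n : ℚ) - (s : ℚ) - 1)) ∧
    (∑ t ∈ Finset.range (n - s + 1),
        (t : ℚ) *
          ((Nat.choose (p + t) p : ℚ) * (Nat.choose (n - 1 - p - t) q : ℚ)
            / (Nat.choose n s : ℚ))
      = ((p : ℚ) + 1) * ((n : ℚ) - (s : ℚ)) / ((s : ℚ) + 1)) := by
  have hs : s = p + q + 1 := by omega
  have hC0 : (0:ℚ) < (Nat.choose n s : ℚ) := by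
    exact_mod_cast Nat.choose_pos hsn.le
  have hC : (Nat.choose n s : ℚ) ≠ 0 := ne_of_gt hC0
  have hnsQ : ((n - s : ℕ) : ℚ) = (n : ℚ) - (s : ℚ) := by
    rw [Nat.cast_sub hsn.le]
  have hr1 : (Nat.choose n (s+1) : ℚ) * ((s:ℚ)+1)
      = (Nat.choose n s : ℚ) * ((n:ℚ) - (s:ℚ)) := by
    have h := Nat.choose_succ_right_eq n s
    have := congrArg (Nat.cast (R := ℚ)) h
    push_cast at this
    rw [Nat.cast_sub hsn.le] at this
    linarith [this]
  obtain ⟨M, hM⟩ : ∃ M, n - s = M + 1 := ⟨n - s - 1, by omega⟩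
  have hnM : n = s + M + 1 := by omega
  constructor
  · -- quadratic part
    rcases Nat.eq_zero_or_pos M with hM0 | hMpos
    · -- n - s = 1
      subst hM0
      rw [show n - s + 1 = 2 by omega]
      have hns1 : (n:ℚ) - (s:ℚ) = 1 := by
        rw [← hnsQ, hM]; norm_num
      rw [Finset.sum_range_succ, Finset.sum_range_succ, Finset.sum_range_zero]
      rw [hns1]
      norm_num
    · obtain ⟨K, hK⟩ : ∃ K, M = K + 1 := ⟨M - 1, by omega⟩
      have hnsQ2 : (n:ℚ) - (s:ℚ) = (K:ℚ) + 2 := by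
        rw [← hnsQ, hM, hK]; push_cast; ring
      have conv : ∑ t ∈ Finset.range (n - s + 1),
          ((t : ℚ) * ((n : ℚ) - (s : ℚ) - (t : ℚ)) / ((n : ℚ) - (s : ℚ))) *
            ((Nat.choose (p + t) p : ℚ) * (Nat.choose (n - 1 - p - t) q : ℚ)
              / (Nat.choose n s : ℚ))
          = ((∑ t ∈ Finset.range (K+3),
              t * (K+2-t) * ((p+t).choose p * (q+(K+2-t)).choose q) : ℕ) : ℚ)
            / ((K:ℚ)+2) / (Nat.choose n s : ℚ) := by
        rw [show n - s + 1 = K + 3 by omega, Nat.cast_sum, Finset.sum_div, Finset.sum_div]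
        apply Finset.sum_congr rfl; intro t ht
        simp only [Finset.mem_range] at ht
        rw [show n - 1 - p - t = q + (K+2-t) by omega, hnsQ2]
        have hcast : ((K + 2 - t : ℕ) : ℚ) = (K:ℚ) + 2 - (t:ℚ) := by
          rw [Nat.cast_sub (by omega)]; push_cast; ring
        push_cast [hcast]
        ring
      rw [conv, L3 p q K]
      rw [show p + q + K + 3 = n by omega]
      have hsym := Nat.choose_symm (show s + 2 ≤ n by omega)
      rw [show n - (s+2) = K by omega] at hsym
      rw [hsym]
      have hr2 : (Nat.choose n (s+2) : ℚ) * ((s:ℚ)+2)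
          = (Nat.choose n (s+1) : ℚ) * ((n:ℚ) - (s:ℚ) - 1) := by
        have h := Nat.choose_succ_right_eq n (s+1)
        have := congrArg (Nat.cast (R := ℚ)) h
        push_cast at this
        rw [Nat.cast_sub (by omega : s + 1 ≤ n)] at this
        push_cast at this
        linarith [this]
      rw [hnsQ2] at hr1 hr2 ⊢
      have key : (Nat.choose n (s+2) : ℚ) * (((s:ℚ)+1)*((s:ℚ)+2))
          = (Nat.choose n s : ℚ) * (((K:ℚ)+1)*((K:ℚ)+2)) := by
        linear_combination ((s:ℚ)+1) * hr2 + ((K:ℚ)+1) * hr1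
      push_cast
      have hs1 : (s:ℚ) + 1 ≠ 0 := by positivity
      have hs2 : (s:ℚ) + 2 ≠ 0 := by positivity
      have hK2 : (K:ℚ) + 2 ≠ 0 := by positivity
      field_simp
      linear_combination key
  · -- linear part
    have conv : ∑ t ∈ Finset.range (n - s + 1),
        (t : ℚ) * ((Nat.choose (p + t) p : ℚ) * (Nat.choose (n - 1 - p - t) q : ℚ)
          / (Nat.choose n s : ℚ))
        = ((∑ t ∈ Finset.range (M+2),
            t * ((p+t).choose p * (q+(M+1-t)).choose q) : ℕ) : ℚ)
          / (Nat.choose n s : ℚ) := by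
      rw [show n - s + 1 = M + 2 by omega]
      push_cast
      rw [Finset.sum_div]
      apply Finset.sum_congr rfl; intro t ht
      simp only [Finset.mem_range] at ht
      rw [show n - 1 - p - t = q + (M+1-t) by omega]
      ring
    rw [conv, L2 p q M]
    rw [show p + q + M + 2 = n by omega]
    have hsym := Nat.choose_symm (show s + 1 ≤ n by omega)
    rw [show n - (s+1) = M by omega] at hsym
    rw [hsym]
    have hs1 : (s:ℚ) + 1 ≠ 0 := by positivity
    field_simp
    push_cast
    linear_combination ((p:ℚ)+1) * hr1
end

section
/- For the classic random pivot (s = 1, p = 0), the expected swap counts satisfy: T^{safe}(n) = n/6 for n ≥ 3, T^{single}(n) = (n−2)/6 for n ≥ 2, and T^{Lomuto}(n) = (n−1)/2; consequently T^{Lomuto}(n)/T^{single}(n) = 3(n−1)/(n−2) > 3 for n ≥ 3. -/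
/-!
Everything is an identity of rational functions. The numerator of `T(n,1,0)` over the common
denominator `6(n - 1)` is `(n + 1)(n + 2) - 6n = (n - 1)(n - 2)`, so the pole at `n = 1` cancels
and `T(n,1,0) = (n - 2)/6`. Then `T^{safe}(n) = (n - 3)/6 + 1/2 = n/6`, and the ratio is
`3(n - 1)/(n - 2) = 3 + 3/(n - 2) > 3`.
-/

section ClassicPivot

variable {K : Type*} [Field K] [CharZero K]

theorem single_swaps_closed_form {x : K} (hx : x - 1 ≠ 0) :
    (1 / 6) * ((x + 1) * (x + 2) / (x - 1)) - x / (x - 1) = (x - 2) / 6 := by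
  have hnum : (x + 1) * (x + 2) - 6 * x = (x - 1) * (x - 2) := by ring
  field_simp
  linear_combination hnum

theorem safe_swaps_closed_form {x : K} (hx₁ : x - 1 ≠ 0) (hx₂ : x - 2 ≠ 0) :
    ((x - 3) / (x - 2)) * ((x - 2) / 6) + ((x - 1) / 2) / (x - 1) = x / 6 := by
  field_simp
  ring

theorem lomuto_div_single_swaps {x : K} (hx : x - 2 ≠ 0) :
    ((x - 1) / 2) / ((x - 2) / 6) = 3 * (x - 1) / (x - 2) := by
  field_simp
  ring

theorem three_lt_three_mul_sub_one_div_sub_two {L : Type*} [Field L] [LinearOrder L]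
    [IsStrictOrderedRing L] {x : L} (hx : 2 < x) :
    3 < 3 * (x - 1) / (x - 2) := by
  rw [lt_div_iff₀ (sub_pos.mpr hx)]
  linarith

end ClassicPivot

/-- Classic random pivot (`s = 1`, `p = 0`): with
`T(n,1,0) = (1/6)((n+1)(n+2)/(n-1)) - n/(n-1)` and `E(n,1,0) = (n+1)/2 - 1`,
one has `T^{safe}(n) = n/6` for `n ≥ 3`, `T^{single}(n) = T(n,1,0) = (n-2)/6`,
`T^{Lomuto}(n) = E(n,1,0) = (n-1)/2`, and for `n ≥ 3` the ratio
`T^{Lomuto}/T^{single} = 3(n-1)/(n-2) > 3`. -/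
theorem classic_pivot_swap_counts (n : ℕ) (hn : 2 ≤ n) :
    ((1 / 6) * (((n : ℚ) + 1) * ((n : ℚ) + 2) / ((n : ℚ) - 1)) - (n : ℚ) / ((n : ℚ) - 1)
        = ((n : ℚ) - 2) / 6) ∧
    (((n : ℚ) + 1) / 2 - 1 = ((n : ℚ) - 1) / 2) ∧
    (3 ≤ n →
      ((((n : ℚ) - 3) / ((n : ℚ) - 2)) *
          ((1 / 6) * (((n : ℚ) + 1) * ((n : ℚ) + 2) / ((n : ℚ) - 1)) - (n : ℚ) / ((n : ℚ) - 1))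
        + (((n : ℚ) + 1) / 2 - 1) / ((n : ℚ) - 1) = (n : ℚ) / 6) ∧
      ((((n : ℚ) - 1) / 2) / (((n : ℚ) - 2) / 6) = 3 * ((n : ℚ) - 1) / ((n : ℚ) - 2)) ∧
      (3 * ((n : ℚ) - 1) / ((n : ℚ) - 2) > 3)) := by
  have h1 : (n : ℚ) - 1 ≠ 0 := by
    have : (2 : ℚ) ≤ n := by exact_mod_cast hn
    linarith
  have hsingle := single_swaps_closed_form h1
  have hlomuto : ((n : ℚ) + 1) / 2 - 1 = ((n : ℚ) - 1) / 2 := by ring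
  refine ⟨hsingle, hlomuto, fun h3 => ?_⟩
  have h3' : (2 : ℚ) < n := by exact_mod_cast h3
  have h2 : (n : ℚ) - 2 ≠ 0 := sub_ne_zero.mpr h3'.ne'
  rw [hsingle, hlomuto]
  exact ⟨safe_swaps_closed_form h1 h2, lomuto_div_single_swaps h2,
    three_lt_three_mul_sub_one_div_sub_two h3'⟩
end
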